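/- arXiv:1804.05041 — 4 statements merged into one kernel-verified Lean document; each statement's English description precedes it below -/
import Mathlib

section
/- Let k ≥ s ≥ 2 and let g : Fin (k+1) → Fin (s+1) be a surjection. If T is a computable s-branching subtree of (s+1)^{<ω}, then the set U = {σ ∈ (k+1)^{<ω} : the coordinatewise image of σ under g belongs to T} is a computable k-tree contained in (k+1)^{<ω}. Consequently, if f : ℕ → Fin (k+1) is not a path through any computable k-tree contained in (k+1)^{<ω}, then g ∘ f is not a path through any computable s-branching subtree of (s+1)^{<ω}. -/
/-! Basic notions: subtrees of `X^{<ω}`, `k`-branching trees, `k`-trees, paths,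
computable trees, relative computability (oracle machines), surviving functions,
and computable traceability. -/

/-- A subtree of `X^{<ω}`: a set of finite strings closed under initial segments. -/
def IsSubtree {X : Type*} (T : Set (List X)) : Prop :=
  ∀ σ ∈ T, ∀ τ : List X, τ <+: σ → τ ∈ T

/-- The set of immediate successors of the node `σ` in the tree `T`. -/
def succSet {X : Type*} (T : Set (List X)) (σ : List X) : Set X :=
  {x | σ ++ [x] ∈ T}

/-- A `k`-branching tree: a subtree in which every node has either exactly `1`
or exactly `k` immediate successors. -/
def IsBranchingTree {X : Type*} (k : ℕ) (T : Set (List X)) : Prop :=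
  IsSubtree T ∧ ∀ σ ∈ T, (succSet T σ).ncard = 1 ∨ (succSet T σ).ncard = k

/-- A `k`-tree: a subtree in which every node has at least `1` and at most `k`
immediate successors. -/
def IsKTree {X : Type*} (k : ℕ) (T : Set (List X)) : Prop :=
  IsSubtree T ∧ ∀ σ ∈ T, 1 ≤ (succSet T σ).ncard ∧ (succSet T σ).ncard ≤ k

/-- `f` is a path through `T`: every finite initial segment of `f` belongs to `T`. -/
def IsPathThrough {X : Type*} (f : ℕ → X) (T : Set (List X)) : Prop :=
  ∀ n : ℕ, (List.range n).map f ∈ T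

/-- A tree is computable when membership is decidable by an algorithm. -/
def ComputableTree {X : Type*} [Primcodable X] (T : Set (List X)) : Prop :=
  ComputablePred (· ∈ T)

/-- Partial functions `ℕ →. ℕ` which are partial recursive relative to the oracle `O`
(the relativization of `Nat.Partrec`). -/
inductive RecursiveInOracle (O : ℕ → ℕ) : (ℕ →. ℕ) → Prop
  | oracle : RecursiveInOracle O (fun n => Part.some (O n))
  | zero : RecursiveInOracle O (pure 0)
  | succ : RecursiveInOracle O ↑Nat.succ
  | left : RecursiveInOracle O ↑fun n : ℕ => n.unpair.1
  | right : RecursiveInOracle O ↑fun n : ℕ => n.unpair.2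
  | pair {f g} : RecursiveInOracle O f → RecursiveInOracle O g →
      RecursiveInOracle O fun n => Nat.pair <$> f n <*> g n
  | comp {f g} : RecursiveInOracle O f → RecursiveInOracle O g →
      RecursiveInOracle O fun n => g n >>= f
  | prec {f g} : RecursiveInOracle O f → RecursiveInOracle O g →
      RecursiveInOracle O (Nat.unpaired fun a n =>
        n.rec (f a) fun y IH => do let i ← IH; g (Nat.pair a (Nat.pair y i)))
  | rfind {f} : RecursiveInOracle O f →
      RecursiveInOracle O fun a => Nat.rfind fun n => (fun m => m = 0) <$> f (Nat.pair a n)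

/-- A total function between `Primcodable` types is computable relative to the oracle `O`. -/
def ComputableInOracle (O : ℕ → ℕ) {α σ : Type*} [Primcodable α] [Primcodable σ] (f : α → σ) : Prop :=
  RecursiveInOracle O fun n =>
    Part.bind ((Encodable.decode (α := α) n) : Part α) fun a =>
      Part.some (Encodable.encode (f a))

/-- For `k ≥ 2`, `f : ℕ → Fin (k+1)` is `k`-surviving if it is not a path through any
computable `k`-branching subtree of `(k+1)^{<ω}`. -/
def KSurviving (k : ℕ) (f : ℕ → Fin (k + 1)) : Prop :=
  ∀ T : Set (List (Fin (k + 1))),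
    IsBranchingTree k T → ComputableTree T → ¬ IsPathThrough f T

/-- The degree of the oracle `O` is computably traceable: there is a computable bound `h`
such that every total `f : ℕ → ℕ` computable in `O` admits a computable trace. -/
def ComputablyTraceableDeg (O : ℕ → ℕ) : Prop :=
  ∃ h : ℕ → ℕ, Computable h ∧
    ∀ f : ℕ → ℕ, ComputableInOracle O f →
      ∃ S : ℕ → Finset ℕ,
        (∃ L : ℕ → List ℕ, Computable L ∧ ∀ n, (L n).toFinset = S n) ∧
        ∀ n, (S n).card ≤ h n ∧ f n ∈ S n

/-!
Pulling back along `g` turns the successor set of `σ` into the preimage `g ⁻¹' S` of the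
successor set `S` of `σ.map g`. In an `s`-branching tree over `s + 1` letters with `s ≠ 0`,
`S` is neither empty nor everything, and since `g` is surjective neither is `g ⁻¹' S`; so
every node of the pullback has between `1` and `k` successors. A path `f` through the pullback
is exactly a function with `g ∘ f` a path through `T`.
-/

theorem ComputablePred.comp {α β : Type*} [Primcodable α] [Primcodable β] {p : β → Prop}
    {f : α → β} (hp : ComputablePred p) (hf : Computable f) : ComputablePred fun a => p (f a) :=
  let ⟨_, hp⟩ := hp
  ⟨fun a => inferInstanceAs (Decidable (p (f a))), hp.comp hf⟩

theorem Set.ncard_preimage_pos_of_surjective {α β : Type*} [Finite α] {f : α → β}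
    (hf : Function.Surjective f) {S : Set β} (hS : S.Nonempty) : 0 < (f ⁻¹' S).ncard :=
  (Set.ncard_pos).2 (hS.preimage hf)

theorem Set.ncard_preimage_lt_of_surjective {α β : Type*} [Finite α] {f : α → β}
    (hf : Function.Surjective f) {S : Set β} (hS : S ≠ Set.univ) :
    (f ⁻¹' S).ncard < Nat.card α := by
  refine Set.ncard_lt_card fun h => hS ?_
  rwa [Set.preimage_eq_univ_iff, hf.range_eq, Set.univ_subset_iff] at h

section Pullback

variable {X Y : Type*}

theorem IsSubtree.preimage_map {T : Set (List Y)} (hT : IsSubtree T) (g : X → Y) :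
    IsSubtree {σ : List X | σ.map g ∈ T} :=
  fun _ hσ _ hτ => hT _ hσ _ (hτ.map g)

theorem succSet_preimage_map (T : Set (List Y)) (g : X → Y) (σ : List X) :
    succSet {σ : List X | σ.map g ∈ T} σ = g ⁻¹' succSet T (σ.map g) := by
  ext
  simp [succSet]

theorem ComputableTree.preimage_map [Primcodable X] [Primcodable Y] {T : Set (List Y)}
    (hT : ComputableTree T) {g : X → Y} (hg : Primrec g) :
    ComputableTree {σ : List X | σ.map g ∈ T} :=
  ComputablePred.comp (p := (· ∈ T)) hT
    (Primrec.list_map Primrec.id (hg.comp₂ Primrec₂.right)).to_comp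

theorem isPathThrough_preimage_map_iff {T : Set (List Y)} {g : X → Y} {f : ℕ → X} :
    IsPathThrough f {σ : List X | σ.map g ∈ T} ↔ IsPathThrough (g ∘ f) T := by
  simp [IsPathThrough]

theorem IsBranchingTree.succSet_nonempty {s : ℕ} (hs : s ≠ 0) {T : Set (List Y)}
    (hT : IsBranchingTree s T) {σ : List Y} (hσ : σ ∈ T) : (succSet T σ).Nonempty := by
  refine Set.nonempty_of_ncard_ne_zero ?_
  rcases hT.2 σ hσ with h | h <;> omega

theorem IsBranchingTree.succSet_ne_univ {s : ℕ} (hs : s ≠ 0) (hY : Nat.card Y = s + 1)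
    {T : Set (List Y)} (hT : IsBranchingTree s T) {σ : List Y} (hσ : σ ∈ T) :
    succSet T σ ≠ Set.univ := by
  intro huniv
  rw [← Set.ncard_univ, ← huniv] at hY
  rcases hT.2 σ hσ with h | h <;> omega

theorem IsBranchingTree.isKTree_preimage_map [Finite X] {s k : ℕ} (hs : s ≠ 0)
    (hY : Nat.card Y = s + 1) (hX : Nat.card X = k + 1) {T : Set (List Y)}
    (hT : IsBranchingTree s T) {g : X → Y} (hg : Function.Surjective g) :
    IsKTree k {σ : List X | σ.map g ∈ T} := by
  refine ⟨hT.1.preimage_map g, fun σ hσ => ?_⟩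
  rw [succSet_preimage_map]
  have hpos := Set.ncard_preimage_pos_of_surjective hg (hT.succSet_nonempty hs hσ)
  have hlt := Set.ncard_preimage_lt_of_surjective hg (hT.succSet_ne_univ hs hY hσ)
  omega

end Pullback

theorem preimage_tree_and_pushforward_surviving_general (k s : ℕ) (hs : 2 ≤ s)
    (g : Fin (k + 1) → Fin (s + 1)) (hg : Function.Surjective g) :
    (∀ T : Set (List (Fin (s + 1))), IsBranchingTree s T → ComputableTree T →
      IsKTree k {σ : List (Fin (k + 1)) | σ.map g ∈ T} ∧
        ComputableTree {σ : List (Fin (k + 1)) | σ.map g ∈ T}) ∧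
    (∀ f : ℕ → Fin (k + 1),
      (∀ U : Set (List (Fin (k + 1))), IsKTree k U → ComputableTree U →
        ¬ IsPathThrough f U) →
      ∀ T : Set (List (Fin (s + 1))), IsBranchingTree s T → ComputableTree T →
        ¬ IsPathThrough (fun n => g (f n)) T) := by
  have pullback : ∀ T : Set (List (Fin (s + 1))), IsBranchingTree s T → ComputableTree T →
      IsKTree k {σ : List (Fin (k + 1)) | σ.map g ∈ T} ∧
        ComputableTree {σ : List (Fin (k + 1)) | σ.map g ∈ T} :=
    fun T hT hTc =>
      ⟨hT.isKTree_preimage_map (by omega) (by simp) (by simp) hg,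
        hTc.preimage_map (Primrec.dom_finite g)⟩
  refine ⟨pullback, fun f hf T hT hTc hpath => ?_⟩
  obtain ⟨hU, hUc⟩ := pullback T hT hTc
  exact hf _ hU hUc (isPathThrough_preimage_map_iff.2 hpath)

/-- pulling back a computable `s`-branching tree along a surjection
`g : Fin (k+1) → Fin (s+1)` yields a computable `k`-tree; consequently a function
surviving all computable `k`-trees pushes forward to a function surviving all
computable `s`-branching trees. -/
theorem preimage_tree_and_pushforward_surviving (k s : ℕ) (hs : 2 ≤ s) (hsk : s ≤ k)
    (g : Fin (k + 1) → Fin (s + 1)) (hg : Function.Surjective g) :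
    (∀ T : Set (List (Fin (s + 1))), IsBranchingTree s T → ComputableTree T →
      IsKTree k {σ : List (Fin (k + 1)) | σ.map g ∈ T} ∧
        ComputableTree {σ : List (Fin (k + 1)) | σ.map g ∈ T}) ∧
    (∀ f : ℕ → Fin (k + 1),
      (∀ U : Set (List (Fin (k + 1))), IsKTree k U → ComputableTree U →
        ¬ IsPathThrough f U) →
      ∀ T : Set (List (Fin (s + 1))), IsBranchingTree s T → ComputableTree T →
        ¬ IsPathThrough (fun n => g (f n)) T) :=
  preimage_tree_and_pushforward_surviving_general k s hs g hg
end

section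
/- Let 2 ≤ k ≤ n. Every nonempty computable k-tree T contained in n^{<ω} (strings over Fin n) is contained in some computable k-branching subtree of n^{<ω}. Consequently, for f : ℕ → Fin n, f is a path through some computable k-tree contained in n^{<ω} if and only if f is a path through some computable k-branching subtree of n^{<ω}. -/
/-! Give every string `σ` exactly `k` successors: its successors in `T` (at most `k`, and none
when `σ ∉ T`), padded by further letters, which is possible since `k ≤ n`. The padding depends only
on the successor set of `σ` in `T`, a subset of the finite alphabet, so the resulting tree is
decidable whenever `T` is. Conversely a `k`-branching tree is a `k`-tree because `1 ≤ k`. -/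

section AdmissibleTree

variable {X : Type*}

def admissibleTree (a : List X → Set X) : Set (List X) :=
  {σ | ∀ τ x, τ ++ [x] <+: σ → x ∈ a τ}

variable {a : List X → Set X} {σ : List X} {x : X}

theorem nil_mem_admissibleTree : [] ∈ admissibleTree a := by
  intro τ x h
  simpa using h.length_le

theorem append_singleton_mem_admissibleTree :
    σ ++ [x] ∈ admissibleTree a ↔ σ ∈ admissibleTree a ∧ x ∈ a σ := by
  simp only [admissibleTree, Set.mem_ofPred_eq, List.prefix_concat_iff, List.append_singleton_inj]
  grind

theorem isSubtree_admissibleTree : IsSubtree (admissibleTree a) :=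
  fun _ hσ _ hτσ ρ y hρτ => hσ ρ y (hρτ.trans hτσ)

theorem succSet_admissibleTree (hσ : σ ∈ admissibleTree a) :
    succSet (admissibleTree a) σ = a σ := by
  ext y
  simp [succSet, append_singleton_mem_admissibleTree, hσ]

theorem subset_admissibleTree {T : Set (List X)} (hT : IsSubtree T) (ha : ∀ τ, succSet T τ ⊆ a τ) :
    T ⊆ admissibleTree a :=
  fun σ hσ τ _ hτσ => ha τ (hT σ hσ _ hτσ)

theorem computableTree_admissibleTree [Primcodable X]
    (ha : ComputablePred fun p : List X × X => p.2 ∈ a p.1) :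
    ComputableTree (admissibleTree a) := by
  obtain ⟨c, hc, hca⟩ := ComputablePred.computable_iff.1 ha
  have hmem : ∀ σ x, x ∈ a σ ↔ c (σ, x) = true := fun σ x => iff_of_eq (congrFun hca (σ, x))
  let admitsUpTo : List X → ℕ → Bool := fun σ m =>
    Nat.rec (motive := fun _ => Bool) true
      (fun i b => b && Option.casesOn (motive := fun _ => Bool) σ[i]? true fun x => c (σ.take i, x)) m
  have hspec : ∀ σ m, admitsUpTo σ m = true ↔ σ.take m ∈ admissibleTree a := by
    intro σ m
    induction m with
    | zero => simpa [admitsUpTo] using nil_mem_admissibleTree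
    | succ m ih =>
      rw [List.take_add_one]
      cases hm : σ[m]? with
      | none => simpa [admitsUpTo, hm] using ih
      | some x => simp [admitsUpTo, hm, append_singleton_mem_admissibleTree, ← ih, hmem]
  refine ComputablePred.computable_iff.2 ⟨fun σ => admitsUpTo σ σ.length, ?_, ?_⟩
  · have hstep : Computable₂ fun (σ : List X) (p : ℕ × Bool) =>
        p.2 && Option.casesOn (motive := fun _ => Bool) σ[p.1]? true fun x => c (σ.take p.1, x) :=
      Primrec.and.to_comp.comp (Computable.snd.comp .snd) <|
        Computable.option_casesOn (Computable.list_getElem?.comp .fst (Computable.fst.comp .snd))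
          (Computable.const true) <|
          hc.comp₂ <| Computable.pair
            (Primrec.list_take.to_comp.comp (Computable.fst.comp (Computable.snd.comp .fst))
              (Computable.fst.comp .fst)) .snd
    exact Computable.nat_rec Computable.list_length (Computable.const true) hstep
  · ext σ
    simpa using (hspec σ σ.length).symm

end AdmissibleTree

section KTree

variable {X : Type*} {k : ℕ} {T : Set (List X)}

theorem succSet_eq_empty_of_notMem (hT : IsSubtree T) {σ : List X} (hσ : σ ∉ T) :
    succSet T σ = ∅ :=
  Set.eq_empty_of_forall_notMem fun x hx => hσ (hT _ hx σ (List.prefix_append σ [x]))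

theorem IsKTree.ncard_succSet_le (hT : IsKTree k T) (σ : List X) : (succSet T σ).ncard ≤ k := by
  by_cases hσ : σ ∈ T
  · exact (hT.2 σ hσ).2
  · simp [succSet_eq_empty_of_notMem hT.1 hσ]

theorem IsBranchingTree.isKTree (hk : 1 ≤ k) (hT : IsBranchingTree k T) : IsKTree k T :=
  ⟨hT.1, fun σ hσ => by rcases hT.2 σ hσ with h | h <;> omega⟩

/-- Over a finite alphabet `succSet T σ` is read off from finitely many membership queries, and any
operation `Φ` on such sets is a finite table lookup. -/
theorem ComputableTree.computablePred_mem_map_succSet {n : ℕ} {T : Set (List (Fin n))}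
    (hT : ComputableTree T) (Φ : Set (Fin n) → Set (Fin n)) :
    ComputablePred fun p : List (Fin n) × Fin n => p.2 ∈ Φ (succSet T p.1) := by
  classical
  obtain ⟨t, ht, hteq⟩ := ComputablePred.computable_iff.1 hT
  have hsucc : ∀ σ, succSet T σ = {y | t (σ ++ [y]) = true} := fun σ => by
    ext y; exact iff_of_eq (congrFun hteq _)
  have hchildren : Computable fun σ : List (Fin n) => fun y => t (σ ++ [y]) :=
    (Primrec.vector_get'.to_comp.comp <| Computable.vector_ofFn fun y =>
      ht.comp (Computable.list_concat.comp .id (.const y))).of_eq fun σ => by funext y; simp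
  have htable := Primrec.dom_finite fun q : (Fin n → Bool) × Fin n =>
    decide (q.2 ∈ Φ {y | q.1 y = true})
  refine ComputablePred.computable_iff.2
    ⟨fun p => decide (p.2 ∈ Φ {y | t (p.1 ++ [y]) = true}), ?_, ?_⟩
  · exact htable.to_comp.comp (Computable.pair (hchildren.comp .fst) .snd)
  · ext p
    simp [hsucc]

theorem IsKTree.exists_isBranchingTree_superset {n : ℕ} (hkn : k ≤ n) {T : Set (List (Fin n))}
    (hT : IsKTree k T) (hc : ComputableTree T) :
    ∃ T', IsBranchingTree k T' ∧ ComputableTree T' ∧ T ⊆ T' := by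
  choose! pad hpad using fun (S : Set (Fin n)) (hS : S.ncard ≤ k) =>
    Set.exists_subsuperset_card_eq (Set.subset_univ S) hS (by simpa using hkn)
  refine ⟨admissibleTree fun σ => pad (succSet T σ), ⟨isSubtree_admissibleTree, fun σ hσ => ?_⟩,
    computableTree_admissibleTree (hc.computablePred_mem_map_succSet pad),
    subset_admissibleTree hT.1 fun σ => (hpad _ (hT.ncard_succSet_le σ)).1⟩
  rw [succSet_admissibleTree hσ]
  exact Or.inr (hpad _ (hT.ncard_succSet_le σ)).2.2

end KTree

/-- for `2 ≤ k ≤ n`, every nonempty computable `k`-tree in `n^{<ω}` is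
contained in a computable `k`-branching subtree of `n^{<ω}`; consequently paths
through computable `k`-trees and through computable `k`-branching trees coincide. -/
theorem kTree_extends_to_kBranching_finite_alphabet (k n : ℕ) (h2 : 2 ≤ k) (hkn : k ≤ n) :
    (∀ T : Set (List (Fin n)), T.Nonempty → IsKTree k T → ComputableTree T →
      ∃ T' : Set (List (Fin n)),
        IsBranchingTree k T' ∧ ComputableTree T' ∧ T ⊆ T') ∧
    (∀ f : ℕ → Fin n,
      (∃ T : Set (List (Fin n)), IsKTree k T ∧ ComputableTree T ∧ IsPathThrough f T) ↔
      (∃ T : Set (List (Fin n)),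
        IsBranchingTree k T ∧ ComputableTree T ∧ IsPathThrough f T)) := by
  refine ⟨fun T _ hT hc => hT.exists_isBranchingTree_superset hkn hc, fun f => ⟨?_, ?_⟩⟩
  · rintro ⟨T, hT, hc, hf⟩
    obtain ⟨T', hT', hc', hTT'⟩ := hT.exists_isBranchingTree_superset hkn hc
    exact ⟨T', hT', hc', fun m => hTT' (hf m)⟩
  · rintro ⟨T, hT, hc, hf⟩
    exact ⟨T, hT.isKTree (by omega), hc, hf⟩
end

section
/- For every k ≥ 2, if f : ℕ → Fin (k+1) is k-surviving, then the function f viewed as a map ℕ → ℕ is k-globally branch surviving: f is not a path through any computable k-branching subtree of ω^{<ω}. -/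
/-!
Let `T ⊆ ω^{<ω}` be a computable `k`-branching tree with `f` a path through it. A node of `T`
has `1` or `k` successors, so, as `k ≥ 1`, some `x ≤ k` is not a successor of it, and the
greatest such `x` is found computably. Forbidding, at every node, that single symbol yields a
computable subtree of `(k+1)^{<ω}` in which every node has exactly `k` successors; `f` never
takes a forbidden value, so it is a path through this tree, contradicting `k`-surviving.
-/

section Computability

variable {α : Type*} [Primcodable α]

theorem ComputablePred.forall_lt {n : α → ℕ} {p : α → ℕ → Prop} [∀ a, DecidablePred (p a)]
    (hn : Computable n) (hp : Computable₂ fun a i => decide (p a i)) :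
    ComputablePred fun a => ∀ i < n a, p a i := by
  refine ⟨inferInstance, ?_⟩
  have hrec : Computable fun a =>
      Nat.rec (motive := fun _ => Bool) true (fun i acc => acc && decide (p a i)) (n a) :=
    Computable.nat_rec hn (Computable.const true)
      (Primrec.and.to_comp.comp (Computable.snd.comp Computable.snd)
        (hp.comp Computable.fst (Computable.fst.comp Computable.snd))).to₂
  refine hrec.of_eq fun a => ?_
  change _ = decide (∀ i < n a, p a i)
  induction n a with
  | zero => simp
  | succ m ih => simp only [ih, Nat.forall_lt_succ_right, Bool.decide_and]

theorem Computable.nat_findGreatest {f : α → ℕ} {p : α → ℕ → Prop} [DecidableRel p]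
    (hf : Computable f) (hp : Computable₂ fun a i => decide (p a i)) :
    Computable fun a => (f a).findGreatest (p a) := by
  have hrec : Computable fun a => Nat.rec (motive := fun _ => ℕ) 0
      (fun m acc => bif decide (p a (m + 1)) then m + 1 else acc) (f a) :=
    Computable.nat_rec hf (Computable.const 0)
      (Computable.cond
        (hp.comp Computable.fst (Computable.succ.comp (Computable.fst.comp Computable.snd)))
        (Computable.succ.comp (Computable.fst.comp Computable.snd))
        (Computable.snd.comp Computable.snd)).to₂
  refine hrec.of_eq fun a => ?_
  induction f a with
  | zero => simp
  | succ m ih => by_cases h : p a (m + 1) <;> simp [ih, h]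

theorem Primrec.fin_ofNat (n : ℕ) [NeZero n] : Primrec (Fin.ofNat n) :=
  Primrec.fin_val_iff.1 <| (Primrec.nat_mod.comp Primrec.id (Primrec.const n)).of_eq
    fun m => (Fin.val_ofNat n m).symm

end Computability

section AvoidTree

variable {α : Type*}

def avoidTree (e : List α → α) : Set (List α) :=
  {σ | ∀ i < σ.length, σ[i]? ≠ some (e (σ.take i))}

variable {e : List α → α}

theorem avoidTree_append_singleton {σ : List α} {a : α} :
    σ ++ [a] ∈ avoidTree e ↔ σ ∈ avoidTree e ∧ a ≠ e σ := by
  simp only [avoidTree, Set.mem_ofPred_eq, List.length_append, List.length_singleton,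
    Nat.forall_lt_succ_right]
  refine and_congr (forall₂_congr fun i hi => ?_) ?_
  · rw [List.getElem?_append_left hi, List.take_append_of_le_length hi.le]
  · simp

theorem isSubtree_avoidTree : IsSubtree (avoidTree e) := by
  rintro _ hσ τ ⟨ρ, rfl⟩ i hi
  have := hσ i (by simp; omega)
  rwa [List.getElem?_append_left hi, List.take_append_of_le_length hi.le] at this

theorem succSet_avoidTree {σ : List α} (hσ : σ ∈ avoidTree e) :
    succSet (avoidTree e) σ = {e σ}ᶜ := by
  ext a
  simp [succSet, avoidTree_append_singleton, hσ]

theorem isBranchingTree_avoidTree [Finite α] {k : ℕ} (hα : Nat.card α = k + 1) :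
    IsBranchingTree k (avoidTree e) := by
  refine ⟨isSubtree_avoidTree, fun σ hσ => Or.inr ?_⟩
  rw [succSet_avoidTree hσ, Set.ncard_compl, Set.ncard_singleton, hα, Nat.add_sub_cancel]

theorem computableTree_avoidTree [Primcodable α] [DecidableEq α] (he : Computable e) :
    ComputableTree (avoidTree e) :=
  ComputablePred.forall_lt Computable.list_length <|
    (Primrec.eq.not.decide.to_comp.comp
      (Computable.list_getElem?.comp Computable.fst Computable.snd)
      (Computable.option_some.comp <| he.comp <|
        Primrec.list_take.to_comp.comp Computable.snd Computable.fst)).to₂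

theorem isPathThrough_avoidTree {f : ℕ → α} (hf : ∀ n, f n ≠ e ((List.range n).map f)) :
    IsPathThrough f (avoidTree e) := by
  intro n
  induction n with
  | zero => simp [avoidTree]
  | succ n ih =>
    rw [List.range_succ, List.map_append, List.map_singleton, avoidTree_append_singleton]
    exact ⟨ih, hf n⟩

end AvoidTree

theorem exists_append_singleton_notMem {T : Set (List ℕ)} {k : ℕ} (hk : 1 ≤ k) {σ : List ℕ}
    (hσ : (succSet T σ).ncard = 1 ∨ (succSet T σ).ncard = k) : ∃ x ≤ k, σ ++ [x] ∉ T := by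
  by_contra! hall
  have hsub : (Finset.range (k + 1) : Set ℕ) ⊆ succSet T σ := fun x hx =>
    hall x (Nat.lt_succ_iff.1 (Finset.mem_range.1 hx))
  rcases (succSet T σ).finite_or_infinite with hfin | hinf
  · have := Set.ncard_le_ncard hsub hfin
    rw [Set.ncard_coe_finset, Finset.card_range] at this
    omega
  · rw [hinf.ncard] at hσ
    omega

section MissingSucc

variable (T : Set (List ℕ)) [DecidablePred (· ∈ T)] (k : ℕ)

def missingSucc (σ : List ℕ) : ℕ :=
  k.findGreatest fun x => σ ++ [x] ∉ T

variable {T k}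

theorem missingSucc_le (σ : List ℕ) : missingSucc T k σ ≤ k :=
  Nat.findGreatest_le k

theorem append_missingSucc_notMem (hk : 1 ≤ k) (hT : IsBranchingTree k T) {σ : List ℕ}
    (hσ : σ ∈ T) : σ ++ [missingSucc T k σ] ∉ T := by
  obtain ⟨x, hxk, hx⟩ := exists_append_singleton_notMem hk (hT.2 σ hσ)
  exact Nat.findGreatest_spec (P := fun x => σ ++ [x] ∉ T) hxk hx

theorem computable_missingSucc (hT : Computable fun σ => decide (σ ∈ T)) :
    Computable (missingSucc T k) :=
  Computable.nat_findGreatest (Computable.const k) <|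
    (Primrec.not.to_comp.comp <| hT.comp <|
      Computable.list_concat.comp Computable.fst Computable.snd).to₂.of_eq fun _ => by simp

end MissingSucc

/-- for `k ≥ 2`, a `k`-surviving `f : ℕ → Fin (k+1)`, viewed as a map
`ℕ → ℕ`, is `k`-globally branch surviving. -/
theorem kSurviving_implies_kGlobally_branch_surviving (k : ℕ) (hk : 2 ≤ k)
    (f : ℕ → Fin (k + 1)) (hf : KSurviving k f) :
    ∀ T : Set (List ℕ), IsBranchingTree k T → ComputableTree T →
      ¬ IsPathThrough (fun n => (f n : ℕ)) T := by
  rintro T hT ⟨_, hTc⟩ hpath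
  let e : List (Fin (k + 1)) → Fin (k + 1) := fun σ =>
    Fin.ofNat _ (missingSucc T k (σ.map (↑)))
  refine hf (avoidTree e) (isBranchingTree_avoidTree (Nat.card_fin _))
    (computableTree_avoidTree ?_) (isPathThrough_avoidTree fun n hn => ?_)
  · exact (Primrec.fin_ofNat _).to_comp.comp <| (computable_missingSucc hTc).comp <|
      (Primrec.list_map Primrec.id (Primrec.fin_val.comp Primrec.snd).to₂).to_comp
  · have hval : (f n : ℕ) = missingSucc T k ((List.range n).map fun i => (f i : ℕ)) := by
      rw [hn, Fin.val_ofNat, Nat.mod_eq_of_lt (Nat.lt_succ_of_le (missingSucc_le _)),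
        List.map_map]
      rfl
    have hmem := hpath (n + 1)
    rw [List.range_succ, List.map_append, List.map_singleton, hval] at hmem
    exact append_missingSucc_notMem (by omega) hT (hpath n) hmem
end

section
/- There exist a computable 3-tree T contained in ω^{<ω} and a function A : ℕ → ℕ which is a path through T such that, for every k ≥ 2, A is not a path through any computable k-branching subtree of ω^{<ω}. In particular, there is a globally branch surviving function that is not 3-globally tree surviving. -/
/-!
At depth `n`, the tree `haltTree` lets a string continue by `0`, by `1`, and by `s + 1` if the
`n`-th machine halts on input `0` exactly at stage `s`. It is a computable `3`-tree. Suppose a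
computable `k`-branching tree `T'` (`k ≥ 2`) contained every extension in `haltTree` of some node
`σ`. Along `σ 0 0 0 …` each node of `T'` has the two successors `0` and `1`, hence exactly `k`;
a set of known finite size can be enumerated completely, so `T'` would tell whether the
successor `s + 1` exists, deciding the halting problem on all inputs beyond `|σ|`. So every node
of `haltTree` has an extension leaving `T'`, and as there are only countably many computable
trees, a path through `haltTree` can be built that leaves all of them.
-/

open Nat.Partrec (Code)

section Paths

variable {X : Type*}

theorem exists_map_range_eq_of_prefix_chain [Inhabited X] {s : ℕ → List X}
    (hs : ∀ n, s n <+: s (n + 1)) (hlen : ∀ n, n ≤ (s n).length) :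
    ∃ f : ℕ → X, ∀ n, (List.range (s n).length).map f = s n := by
  have hmono : ∀ {m n}, m ≤ n → s m <+: s n := by
    intro m n hmn
    induction n, hmn using Nat.le_induction with
    | base => exact List.prefix_refl _
    | succ n _ ih => exact ih.trans (hs n)
  refine ⟨fun i => (s (i + 1)).getD i default, fun n => List.ext_getElem (by simp) ?_⟩
  intro i hi _
  have hi' : i < (s (i + 1)).length := hlen (i + 1)
  simp only [List.getElem_map, List.getElem_range, List.getD_eq_getElem _ _ hi']
  rcases le_total (i + 1) n with h | h
  · exact (hmono h).getElem hi'
  · exact ((hmono h).getElem _).symm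

theorem exists_isPathThrough_forall_not_isPathThrough [Inhabited X] {T : Set (List X)}
    (hT : IsSubtree T) (hnil : [] ∈ T) (hsucc : ∀ σ ∈ T, (succSet T σ).Nonempty)
    {𝒯 : Set (Set (List X))} (h𝒯 : 𝒯.Countable)
    (hescape : ∀ T' ∈ 𝒯, ∀ σ ∈ T, ∃ τ ∈ T, σ <+: τ ∧ τ ∉ T') :
    ∃ f : ℕ → X, IsPathThrough f T ∧ ∀ T' ∈ 𝒯, ¬ IsPathThrough f T' := by
  -- `∅` is escaped trivially; adding it makes the family nonempty, so that it can be enumerated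
  obtain ⟨e, he⟩ := (h𝒯.insert ∅).exists_eq_range (Set.insert_nonempty _ _)
  have hstep : ∀ n, ∀ σ ∈ T, ∃ τ ∈ T, σ <+: τ ∧ σ.length < τ.length ∧ τ ∉ e n := by
    intro n σ hσ
    obtain ⟨x, hx⟩ := hsucc σ hσ
    obtain ⟨τ, hτ, hxτ, hτn⟩ : ∃ τ ∈ T, σ ++ [x] <+: τ ∧ τ ∉ e n := by
      rcases (he ▸ Set.mem_range_self n : e n ∈ insert ∅ 𝒯) with h | h
      · exact ⟨_, hx, List.prefix_refl _, h ▸ Set.notMem_empty _⟩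
      · exact hescape _ h _ hx
    have hlen := hxτ.length_le
    simp only [List.length_append, List.length_singleton] at hlen
    exact ⟨τ, hτ, (List.prefix_append _ _).trans hxτ, by omega, hτn⟩
  choose! next hnextT hnext_prefix hnext_length hnext_escape using hstep
  let s : ℕ → List X := fun n => n.rec [] next
  have hs : ∀ n, s n ∈ T ∧ n ≤ (s n).length := by
    intro n
    induction n with
    | zero => exact ⟨hnil, Nat.zero_le _⟩
    | succ n ih => exact ⟨hnextT n _ ih.1, (hnext_length n _ ih.1).trans_le' ih.2⟩
  obtain ⟨f, hf⟩ := exists_map_range_eq_of_prefix_chain (s := s)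
    (fun n => hnext_prefix n _ (hs n).1) (fun n => (hs n).2)
  refine ⟨f, fun n => hT _ (hs n).1 _ ?_, fun T' hT' hpath => ?_⟩
  · rw [← hf n, List.prefix_iff_eq_take, List.length_map, List.length_range, ← List.map_take,
      List.take_range, min_eq_left (hs n).2]
  · obtain ⟨n, rfl⟩ : T' ∈ Set.range e := he ▸ Set.mem_insert_of_mem _ hT'
    exact hnext_escape n _ (hs n).1 (hf (n + 1) ▸ hpath _ :)

end Paths

section Computability

variable {α : Type*} [Primcodable α]

theorem Computable.nat_count {p : α → ℕ → Prop} [∀ a, DecidablePred (p a)]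
    (hp : ComputablePred fun x : α × ℕ => p x.1 x.2) :
    Computable₂ fun a n => Nat.count (p a) n := by
  have hstep : Computable₂ fun (x : α × ℕ) (y : ℕ × ℕ) =>
      y.2 + bif decide (p x.1 y.1) then 1 else 0 :=
    Primrec.nat_add.to_comp.comp (Computable.snd.comp Computable.snd)
      (Computable.cond (hp.decide.comp ((Computable.fst.comp Computable.fst).pair
        (Computable.fst.comp Computable.snd))) (Computable.const 1) (Computable.const 0))
  refine (Computable.nat_rec Computable.snd (Computable.const 0) hstep).of_eq fun x => ?_
  induction x.2 with
  | zero => rfl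
  | succ n ih => simp [ih, Nat.count_succ]

theorem ComputablePred.exists_of_ncard_eq {p q : α → ℕ → Prop}
    (hp : ComputablePred fun x : α × ℕ => p x.1 x.2)
    (hq : ComputablePred fun x : α × ℕ => q x.1 x.2) {k : ℕ} (hk : k ≠ 0)
    (hcard : ∀ a, {x | p a x}.ncard = k) :
    ComputablePred fun a => ∃ x, p a x ∧ q a x := by
  classical
  have hfin : ∀ a, {x | p a x}.Finite := fun a => Set.finite_of_ncard_ne_zero (hcard a ▸ hk)
  have hexists : ∀ a, ∃ N, Nat.count (p a) N = k := by
    intro a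
    obtain ⟨N, hN⟩ := (hfin a).toFinset.exists_nat_subset_range
    refine ⟨N, ?_⟩
    rw [Nat.count_eq_card_filter_range, ← hcard a, Set.ncard_eq_toFinset_card _ (hfin a)]
    congr 1
    ext x
    simpa using fun hx => Finset.mem_range.1 (hN ((hfin a).mem_toFinset.2 hx))
  have hbound : ∀ a x, p a x → x < Nat.find (hexists a) := by
    intro a x hx
    by_contra! hle
    have h1 := Nat.count_lt_card (p := p a) (hfin a) hx
    have h2 := Nat.count_monotone (p a) hle
    rw [Nat.find_spec (hexists a), ← Set.ncard_eq_toFinset_card _ (hfin a), hcard a] at *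
    omega
  have hfind : Computable fun a => Nat.find (hexists a) :=
    Computable.find ((Primrec.eq.decide.to_comp.comp (Computable.nat_count hp)
      (Computable.const k)).computablePred) hexists
  have hcount := Computable.nat_count (p := fun a x => p a x ∧ q a x)
    (Computable.computablePred ((Primrec.and.to_comp.comp hp.decide hq.decide).of_eq
      fun _ => by simp))
  refine (Primrec.eq.decide.to_comp.comp (hcount.comp Computable.id hfind)
    (Computable.const 0)).computablePred.not.of_eq fun a => ?_
  rw [id, ← ne_eq, Nat.count_ne_iff_exists]
  exact ⟨fun ⟨x, _, hx⟩ => ⟨x, hx⟩, fun ⟨x, hx⟩ => ⟨x, hbound a x hx.1, hx⟩⟩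

theorem ComputablePred.of_comp_add {p : ℕ → Prop} (m : ℕ)
    (h : ComputablePred fun j => p (m + j)) : ComputablePred p := by
  induction m with
  | zero => simpa using h
  | succ m ih =>
    classical
    refine ih (Computable.computablePred ((Computable.nat_casesOn Computable.id
      (Computable.const (decide (p m))) (h.decide.comp Computable.snd).to₂).of_eq fun j => ?_))
    cases j <;> simp [Nat.add_right_comm m 1, Nat.add_assoc]

theorem countable_setOf_computableTree {X : Type*} [Primcodable X] :
    {T : Set (List X) | ComputableTree T}.Countable := by
  refine (Set.countable_range fun c : Code =>
    {σ : List X | 1 ∈ c.eval (Encodable.encode σ)}).mono ?_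
  intro T hT
  obtain ⟨f, hf, hTf⟩ := ComputablePred.computable_iff.1 hT
  obtain ⟨c, hc⟩ := Nat.Partrec.Code.exists_code.1 hf
  refine ⟨c, Set.ext fun σ => ?_⟩
  rw [Set.mem_ofPred_eq, show (σ ∈ T) = (f σ = true) from congrFun hTf σ]
  cases h : f σ <;> simp [hc, Encodable.encodek, h]

end Computability

section LevelTree

variable {X : Type*}

def levelTree (S : ℕ → Set X) : Set (List X) :=
  {σ | ∀ i (hi : i < σ.length), σ[i] ∈ S i}

variable {S : ℕ → Set X}

theorem nil_mem_levelTree : [] ∈ levelTree S := fun _ hi => absurd hi (Nat.not_lt_zero _)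

theorem isSubtree_levelTree : IsSubtree (levelTree S) :=
  fun _ hσ _ hτσ i hi => hτσ.getElem hi ▸ hσ i _

theorem append_singleton_mem_levelTree {σ : List X} {x : X} :
    σ ++ [x] ∈ levelTree S ↔ σ ∈ levelTree S ∧ x ∈ S σ.length := by
  constructor
  · intro h
    refine ⟨fun i hi => ?_, by simpa using h σ.length (by simp)⟩
    have := h i (by simp; omega)
    rwa [List.getElem_append_left hi] at this
  · rintro ⟨hσ, hx⟩ i hi
    rcases (Nat.lt_succ_iff_lt_or_eq.1 (by simpa using hi)) with hi' | rfl
    · rw [List.getElem_append_left hi']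
      exact hσ i hi'
    · simpa using hx

theorem succSet_levelTree {σ : List X} (hσ : σ ∈ levelTree S) :
    succSet (levelTree S) σ = S σ.length :=
  Set.ext fun _ => append_singleton_mem_levelTree.trans (and_iff_right hσ)

theorem isKTree_levelTree {k : ℕ} (hS : ∀ n, (S n).ncard ∈ Set.Icc 1 k) :
    IsKTree k (levelTree S) :=
  ⟨isSubtree_levelTree, fun _ hσ => succSet_levelTree hσ ▸ hS _⟩

theorem computableTree_levelTree [Primcodable X] [Inhabited X]
    (hS : PrimrecRel fun n (x : X) => x ∈ S n) : ComputableTree (levelTree S) := by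
  classical
  have hentry : PrimrecRel fun i (σ : List X) => σ.getD i default ∈ S i :=
    hS.comp Primrec.fst ((Primrec.list_getD default).comp Primrec.snd Primrec.fst)
  refine ((hentry.forall_mem_list.comp (Primrec.list_range.comp Primrec.list_length)
    Primrec.id).computablePred).of_eq fun σ => ⟨fun h i hi => ?_, fun h i hi => ?_⟩
  · simpa only [id, List.getD_eq_getElem _ _ hi] using h i (List.mem_range.2 hi)
  · simpa only [id, List.getD_eq_getElem _ _ (List.mem_range.1 hi)] using h i (List.mem_range.1 hi)

end LevelTree

section HaltTree

open Nat.Partrec.Code (evaln)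

def haltsWithin (n s : ℕ) : Bool := (evaln s (Denumerable.ofNat Code n) 0).isSome

theorem haltsWithin_zero (n : ℕ) : haltsWithin n 0 = false := by
  simp [haltsWithin, evaln]

theorem haltsWithin_mono {n s t : ℕ} (hst : s ≤ t) (h : haltsWithin n s) : haltsWithin n t := by
  obtain ⟨y, hy⟩ := Option.isSome_iff_exists.1 h
  exact Option.isSome_iff_exists.2 ⟨y, Nat.Partrec.Code.evaln_mono hst hy⟩

theorem exists_haltsWithin_iff (n : ℕ) :
    (∃ s, haltsWithin n s) ↔ ((Denumerable.ofNat Code n).eval 0).Dom := by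
  simp only [haltsWithin, Option.isSome_iff_exists, Part.dom_iff_mem,
    Nat.Partrec.Code.evaln_complete (c := Denumerable.ofNat Code n)]
  exact ⟨fun ⟨s, y, hy⟩ => ⟨y, s, hy⟩, fun ⟨y, s, hy⟩ => ⟨s, y, hy⟩⟩

theorem primrec_haltsWithin : Primrec₂ haltsWithin :=
  Primrec.option_isSome.comp (Nat.Partrec.Code.primrec_evaln.comp
    ((Primrec.snd.pair ((Primrec.ofNat Code).comp Primrec.fst)).pair (Primrec.const 0)))

/-- Level `n` of `haltTree`: besides `0` and `1`, it contains `s + 1` if the `n`-th code halts on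
input `0` first at stage `s` (which is never `0`). -/
def haltLevel (n : ℕ) : Set ℕ :=
  {x | x < 2 ∨ haltsWithin n (x - 1) ∧ ¬ haltsWithin n (x - 2)}

def haltTree : Set (List ℕ) := levelTree haltLevel

theorem mem_haltLevel_iff_isLeast {n x : ℕ} (hx : 2 ≤ x) :
    x ∈ haltLevel n ↔ IsLeast {s | haltsWithin n s} (x - 1) := by
  simp only [haltLevel, Set.mem_ofPred_eq, IsLeast, mem_lowerBounds]
  refine or_iff_right (by omega) |>.trans
    (and_congr_right fun _ => ⟨fun h t ht => ?_, fun h h' => ?_⟩)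
  · by_contra! hlt
    exact h (haltsWithin_mono (by omega) ht)
  · have := h _ h'
    omega

theorem zero_mem_haltLevel (n : ℕ) : 0 ∈ haltLevel n := Or.inl (by norm_num)

theorem one_mem_haltLevel (n : ℕ) : 1 ∈ haltLevel n := Or.inl (by norm_num)

theorem exists_two_le_mem_haltLevel_iff (n : ℕ) :
    (∃ x ∈ haltLevel n, 2 ≤ x) ↔ ((Denumerable.ofNat Code n).eval 0).Dom := by
  classical
  rw [← exists_haltsWithin_iff]
  constructor
  · rintro ⟨x, hx, h2⟩
    exact ⟨_, ((mem_haltLevel_iff_isLeast h2).1 hx).1⟩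
  · intro h
    have hpos : Nat.find h ≠ 0 := fun h0 => by simpa [h0, haltsWithin_zero] using Nat.find_spec h
    refine ⟨Nat.find h + 1, (mem_haltLevel_iff_isLeast (by omega)).2 ?_, by omega⟩
    simpa using Nat.isLeast_find h

theorem ncard_haltLevel_mem_Icc (n : ℕ) : (haltLevel n).ncard ∈ Set.Icc 1 3 := by
  set E := {x | 2 ≤ x ∧ x ∈ haltLevel n}
  have hE : E.Subsingleton := fun x ⟨hx2, hx⟩ y ⟨hy2, hy⟩ => by
    have := ((mem_haltLevel_iff_isLeast hx2).1 hx).unique ((mem_haltLevel_iff_isLeast hy2).1 hy)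
    omega
  have heq : haltLevel n = insert 0 (insert 1 E) := by
    ext x
    refine ⟨fun hx => ?_, ?_⟩
    · rcases lt_or_ge x 2 with h | h
      · interval_cases x <;> simp
      · exact Or.inr (Or.inr ⟨h, hx⟩)
    · rintro (rfl | rfl | hx)
      exacts [zero_mem_haltLevel n, one_mem_haltLevel n, hx.2]
  have hfin : (insert 0 (insert 1 E)).Finite := (hE.finite.insert 1).insert 0
  rw [heq]
  refine ⟨Nat.one_le_iff_ne_zero.2 (Set.ncard_pos hfin |>.2 (Set.insert_nonempty _ _)).ne', ?_⟩
  have := (Set.ncard_insert_le 0 _).trans (Nat.add_le_add_right (Set.ncard_insert_le 1 E) 1)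
  have := (Set.ncard_le_one hE.finite).2 hE
  omega

theorem primrecRel_mem_haltLevel : PrimrecRel fun n x => x ∈ haltLevel n := by
  have hhalts : ∀ c, Primrec fun p : ℕ × ℕ => haltsWithin p.1 (p.2 - c) := fun c =>
    primrec_haltsWithin.comp Primrec.fst (Primrec.nat_sub.comp Primrec.snd (Primrec.const c))
  have hmem : Primrec fun p : ℕ × ℕ =>
      decide (p.2 < 2) || (haltsWithin p.1 (p.2 - 1) && !haltsWithin p.1 (p.2 - 2)) :=
    Primrec.or.comp (Primrec.nat_lt.decide.comp Primrec.snd (Primrec.const 2))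
      (Primrec.and.comp (hhalts 1) (Primrec.not.comp (hhalts 2)))
  exact (Primrec.eq.comp hmem (Primrec.const true)).of_eq fun p => by simp [haltLevel]

theorem isKTree_haltTree : IsKTree 3 haltTree := isKTree_levelTree ncard_haltLevel_mem_Icc

theorem computableTree_haltTree : ComputableTree haltTree :=
  computableTree_levelTree primrecRel_mem_haltLevel

theorem exists_extension_mem_haltTree_not_mem {k : ℕ} (hk : 2 ≤ k) {T' : Set (List ℕ)}
    (hb : IsBranchingTree k T') (hc : ComputableTree T') {σ : List ℕ} (hσ : σ ∈ haltTree) :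
    ∃ τ ∈ haltTree, σ <+: τ ∧ τ ∉ T' := by
  classical
  by_contra! hT'
  set ρ : ℕ → List ℕ := fun j => σ ++ List.replicate j 0
  have hρ : ∀ j, ρ j ∈ haltTree := by
    intro j
    induction j with
    | zero => simpa [ρ] using hσ
    | succ j ih =>
      rw [show ρ (j + 1) = ρ j ++ [0] by simp [ρ, List.replicate_succ']]
      exact append_singleton_mem_levelTree.2 ⟨ih, zero_mem_haltLevel _⟩
  have hlevel : ∀ j, haltLevel (σ.length + j) ⊆ succSet T' (ρ j) := fun j x hx =>
    hT' _ (append_singleton_mem_levelTree.2 ⟨hρ j, by simpa [ρ] using hx⟩)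
      ((List.prefix_append _ _).trans (List.prefix_append _ _))
  -- `0` and `1` are successors of `ρ j` in `T'`, so `ρ j` is a `k`-fold branching node
  have hcard : ∀ j, (succSet T' (ρ j)).ncard = k := by
    intro j
    refine (hb.2 _ (hT' _ (hρ j) (List.prefix_append _ _))).resolve_left fun h1 => ?_
    obtain ⟨a, ha⟩ := Set.ncard_eq_one.1 h1
    have h0 := ha ▸ hlevel j (zero_mem_haltLevel _)
    have h1 := ha ▸ hlevel j (one_mem_haltLevel _)
    exact zero_ne_one (h0.trans h1.symm)
  have hρc : Computable ρ :=
    (Primrec.list_append.comp (Primrec.const σ)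
      (Primrec.list_map Primrec.list_range (Primrec.const 0).to₂)).to_comp.of_eq
      fun j => by simp [ρ, List.map_const']
  have hdec : ComputablePred fun j =>
      ∃ x, x ∈ succSet T' (ρ j) ∧ (2 ≤ x ∧ x ∈ haltLevel (σ.length + j)) :=
    ComputablePred.exists_of_ncard_eq (p := fun j x => x ∈ succSet T' (ρ j))
      (hc.decide.comp (Computable.list_concat.comp (hρc.comp Computable.fst) Computable.snd)
        |>.computablePred)
      ((Primrec.nat_le.comp (Primrec.const 2) Primrec.snd).and
        (primrecRel_mem_haltLevel.comp (Primrec.nat_add.comp (Primrec.const _) Primrec.fst)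
          Primrec.snd) |>.computablePred)
      (by omega) hcard
  have hhalt : ComputablePred fun n => ((Denumerable.ofNat Code n).eval 0).Dom := by
    refine ComputablePred.of_comp_add σ.length (hdec.of_eq fun j => ?_)
    rw [← exists_two_le_mem_haltLevel_iff]
    exact ⟨fun ⟨x, _, h2, hx⟩ => ⟨x, hx, h2⟩, fun ⟨x, hx, h2⟩ => ⟨x, hlevel j hx, h2, hx⟩⟩
  exact ComputablePred.halting_problem 0
    ((hhalt.decide.comp Computable.encode).computablePred.of_eq (by simp))

end HaltTree

/-- there is a computable `3`-tree in `ω^{<ω}` with a path `A` which is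
globally branch surviving (so `A` is not `3`-globally tree surviving). -/
theorem globally_branch_surviving_not_three_tree_surviving :
    ∃ (T : Set (List ℕ)) (A : ℕ → ℕ),
      IsKTree 3 T ∧ ComputableTree T ∧ IsPathThrough A T ∧
      ∀ k : ℕ, 2 ≤ k → ∀ T' : Set (List ℕ),
        IsBranchingTree k T' → ComputableTree T' → ¬ IsPathThrough A T' := by
  let 𝒯 := {T' : Set (List ℕ) | ComputableTree T' ∧ ∃ k, 2 ≤ k ∧ IsBranchingTree k T'}
  obtain ⟨A, hA, hA𝒯⟩ := exists_isPathThrough_forall_not_isPathThrough (T := haltTree)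
    isSubtree_levelTree nil_mem_levelTree
    (fun σ hσ => ⟨0, append_singleton_mem_levelTree.2 ⟨hσ, zero_mem_haltLevel _⟩⟩)
    (countable_setOf_computableTree.mono fun _ h => h.1 : 𝒯.Countable)
    (fun _ ⟨hc, _, hk, hb⟩ _ hσ => exists_extension_mem_haltTree_not_mem hk hb hc hσ)
  exact ⟨haltTree, A, isKTree_haltTree, computableTree_haltTree, hA,
    fun k hk T' hb hc => hA𝒯 T' ⟨hc, k, hk, hb⟩⟩
end
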